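/- For j, m ∈ ℤ_{≥0}, ⟨(a⁺)^{2j} k^{2m}⟩₂₂ = x^j p^m Σ_{i=0}^j (-1)^i p^{2i²} [ (p⁴;p⁴)_j (x;p⁴)_{m+i} ] / [ (p⁴;p⁴)_i (p⁴;p⁴)_{j-i} (xp²;p⁴)_{m+i} ], where ⟨𝒪⟩₂₂ = ⟨χ̄₂(x)|𝒪|χ₂(1)⟩/⟨χ̄₂(x)|χ₂(1)⟩ and ⟨χ̄₂(x)|χ₂(1)⟩ = (px²;p⁴)_∞/(x;p⁴)_∞. -/

import Mathlib

noncomputable def aPlus (p : ℝ) (v : ℕ → ℂ) : ℕ → ℂ := fun m =>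
  match m with
  | 0 => 0
  | Nat.succ m => ((Real.sqrt (1 - p ^ (2 * m + 2)) : ℝ) : ℂ) * v m

noncomputable def kOp (p : ℝ) (v : ℕ → ℂ) : ℕ → ℂ := fun m =>
  ((p : ℂ) ^ m * ((Real.sqrt p : ℝ) : ℂ)) * v m

noncomputable def qPoch (a q : ℝ) (m : ℕ) : ℝ := ∏ i ∈ Finset.range m, (1 - a * q ^ i)

/-- Coefficients of `|χ₂(x)⟩ = (x(a⁺)²;p⁴)_∞^{-1}|0⟩`; the dual vector
`⟨χ̄₂(x)| = ⟨0|(x(a⁻)²;p⁴)_∞^{-1}` has the same coefficients. -/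
noncomputable def chi2 (p x : ℝ) : ℕ → ℂ := fun m =>
  if m % 2 = 0 then
    (x : ℂ) ^ (m / 2) * ((Real.sqrt (qPoch (p ^ 2) (p ^ 2) m) : ℝ) : ℂ)
      / ((qPoch (p ^ 4) (p ^ 4) (m / 2) : ℝ) : ℂ)
  else 0

noncomputable def pairF (f g : ℕ → ℂ) : ℂ := ∑' n : ℕ, f n * g n

open Finset

/-!
Only even levels carry weight: `χ₂` vanishes at odd levels, and `(a⁺)^{2j}` moves level `2l` to
`2l + 2j`. On each level the square roots coming from `a⁺` and from the coefficients of `χ₂`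
multiply to `(p²;p²)_{2(l+j)} = (p²;p⁴)_{l+j} (p⁴;p⁴)_{l+j}`, so with `q = p⁴` the numerator is
`x^j p^m (p²;q)_j φ(p²q^j, q^m x)` and the denominator is `φ(p², x)`, where
`φ(a, t) = ∑ₙ (a;q)_n tⁿ / (q;q)_n = (at;q)_∞ / (t;q)_∞` is the q-binomial series.
Rather than the product formula we use the two contiguity relations
`φ(a, t) = (1 - at) φ(aq, t)` and `(1 - t) φ(a, t) = (1 - at) φ(a, qt)`, which give the ratio
`(p²;q)_j (x;q)_m / (p²x;q)_{j+m}`. Expanding `(p²;q)_j` by the terminating identity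
`(a;q)_j = ∑ᵢ (-a)ⁱ q^{i(i-1)/2} [j, i]_q (z;q)_i (azqⁱ;q)_{j-i}` at `z = x q^m` (an induction on
`j` through the q-Pascal rule) splits this ratio into the stated sum.
-/

lemma qPoch_zero (a q : ℝ) : qPoch a q 0 = 1 := prod_range_zero _

lemma qPoch_succ (a q : ℝ) (n : ℕ) : qPoch a q (n + 1) = qPoch a q n * (1 - a * q ^ n) :=
  prod_range_succ _ _

lemma qPoch_succ' (a q : ℝ) (n : ℕ) : qPoch a q (n + 1) = (1 - a) * qPoch (a * q) q n := by
  simp only [qPoch, prod_range_succ', pow_zero, mul_one, pow_succ', mul_assoc, mul_comm]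

lemma qPoch_add (a q : ℝ) (m n : ℕ) :
    qPoch a q (m + n) = qPoch a q m * qPoch (a * q ^ m) q n := by
  simp only [qPoch, prod_range_add, pow_add, mul_assoc]

lemma qPoch_pos {a q : ℝ} (ha0 : 0 ≤ a) (ha1 : a < 1) (hq0 : 0 ≤ q) (hq1 : q ≤ 1) (n : ℕ) :
    0 < qPoch a q n :=
  prod_pos fun _ _ => sub_pos.2 <|
    (mul_le_of_le_one_right ha0 (pow_le_one₀ hq0 hq1)).trans_lt ha1

lemma qPoch_two_mul (c : ℝ) (r : ℕ) :
    qPoch c c (2 * r) = qPoch c (c ^ 2) r * qPoch (c ^ 2) (c ^ 2) r := by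
  induction r with
  | zero => simp [qPoch_zero]
  | succ r ih =>
    rw [show 2 * (r + 1) = 2 * r + 1 + 1 by ring, qPoch_succ, qPoch_succ, ih, qPoch_succ,
      qPoch_succ]
    ring

lemma one_sub_mul_tsum_eq_of_succ {R : Type*} [Ring R] [TopologicalSpace R]
    [IsTopologicalRing R] [T2Space R] {f g : ℕ → R} {c d : R} (hf : Summable f) (hg : Summable g)
    (h0 : f 0 = g 0) (hsucc : ∀ n, f (n + 1) - c * f n = g (n + 1) - d * g n) :
    (1 - c) * ∑' n, f n = (1 - d) * ∑' n, g n := by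
  have telescope : ∀ (u : ℕ → R) (e : R), Summable u →
      (1 - e) * ∑' n, u n = u 0 + ∑' n, (u (n + 1) - e * u n) := by
    intro u e hu
    rw [((summable_nat_add_iff 1).2 hu).tsum_sub (hu.mul_left e), hu.tsum_mul_left e, sub_mul,
      one_mul, hu.tsum_eq_zero_add]
    abel
  rw [telescope f c hf, telescope g d hg, h0, funext hsucc]

noncomputable def qBinomTerm (a q t : ℝ) (n : ℕ) : ℝ := qPoch a q n * t ^ n / qPoch q q n

noncomputable def qBinomSeries (a q t : ℝ) : ℝ := ∑' n, qBinomTerm a q t n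

section qBinomSeries

variable {a q t : ℝ}

lemma qBinomTerm_zero : qBinomTerm a q t 0 = 1 := by simp [qBinomTerm, qPoch_zero]

lemma qBinomTerm_succ (n : ℕ) :
    qBinomTerm a q t (n + 1) =
      qBinomTerm a q t n * ((1 - a * q ^ n) * t / (1 - q ^ (n + 1))) := by
  simp only [qBinomTerm, qPoch_succ, pow_succ, div_mul_div_comm]
  ring

lemma qBinomTerm_nonneg (ha0 : 0 ≤ a) (ha1 : a < 1) (hq0 : 0 < q) (hq1 : q < 1) (ht0 : 0 ≤ t)
    (n : ℕ) : 0 ≤ qBinomTerm a q t n := by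
  have := qPoch_pos ha0 ha1 hq0.le hq1.le n
  have := qPoch_pos hq0.le hq1 hq0.le hq1.le n
  unfold qBinomTerm
  positivity

lemma summable_qBinomTerm (ha0 : 0 ≤ a) (ha1 : a < 1) (hq0 : 0 < q) (hq1 : q < 1) (ht0 : 0 ≤ t)
    (ht1 : t < 1) : Summable (qBinomTerm a q t) := by
  have hsmall : ∀ᶠ n : ℕ in Filter.atTop, q ^ (n + 1) ≤ (1 - t) / 2 :=
    ((tendsto_pow_atTop_nhds_zero_of_lt_one hq0.le hq1).comp (Filter.tendsto_add_atTop_nat 1)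
      ).eventually (eventually_le_nhds (by linarith))
  refine summable_of_ratio_norm_eventually_le (r := (1 + t) / 2) (by linarith) ?_
  filter_upwards [hsmall] with n hn
  have hterm := qBinomTerm_nonneg ha0 ha1 hq0 hq1 ht0 n
  rw [Real.norm_of_nonneg (qBinomTerm_nonneg ha0 ha1 hq0 hq1 ht0 _), Real.norm_of_nonneg hterm,
    qBinomTerm_succ, mul_comm _ (qBinomTerm a q t n)]
  refine mul_le_mul_of_nonneg_left ?_ hterm
  rw [div_le_iff₀ (by linarith)]
  nlinarith [mul_nonneg ha0 (pow_nonneg hq0.le n)]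

lemma one_le_qBinomSeries (ha0 : 0 ≤ a) (ha1 : a < 1) (hq0 : 0 < q) (hq1 : q < 1) (ht0 : 0 ≤ t)
    (ht1 : t < 1) : 1 ≤ qBinomSeries a q t :=
  calc 1 = qBinomTerm a q t 0 := qBinomTerm_zero.symm
    _ ≤ qBinomSeries a q t := (summable_qBinomTerm ha0 ha1 hq0 hq1 ht0 ht1).le_tsum 0
      fun n _ => qBinomTerm_nonneg ha0 ha1 hq0 hq1 ht0 n

lemma qBinomSeries_eq_one_sub_mul (ha0 : 0 ≤ a) (ha1 : a < 1) (hq0 : 0 < q) (hq1 : q < 1)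
    (ht0 : 0 ≤ t) (ht1 : t < 1) :
    qBinomSeries a q t = (1 - a * t) * qBinomSeries (a * q) q t := by
  have haq0 : 0 ≤ a * q := by positivity
  have haq1 : a * q < 1 := by nlinarith
  have hsucc : ∀ n, qBinomTerm a q t (n + 1) - 0 * qBinomTerm a q t n =
      qBinomTerm (a * q) q t (n + 1) - a * t * qBinomTerm (a * q) q t n := by
    intro n
    have hQ := (qPoch_pos hq0.le hq1 hq0.le hq1.le n).ne'
    have hq : 1 - q * q ^ n ≠ 0 :=
      (sub_pos.2 <| pow_succ' q n ▸ pow_lt_one₀ hq0.le hq1 n.succ_ne_zero).ne'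
    simp only [qBinomTerm]
    rw [qPoch_succ' a, qPoch_succ (a * q), qPoch_succ q q n]
    field_simp
    ring
  simpa [qBinomSeries] using one_sub_mul_tsum_eq_of_succ
    (summable_qBinomTerm ha0 ha1 hq0 hq1 ht0 ht1) (summable_qBinomTerm haq0 haq1 hq0 hq1 ht0 ht1)
    (by simp [qBinomTerm_zero]) hsucc

lemma one_sub_mul_qBinomSeries (ha0 : 0 ≤ a) (ha1 : a < 1) (hq0 : 0 < q) (hq1 : q < 1)
    (ht0 : 0 ≤ t) (ht1 : t < 1) :
    (1 - t) * qBinomSeries a q t = (1 - a * t) * qBinomSeries a q (q * t) := by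
  have hsucc : ∀ n, qBinomTerm a q t (n + 1) - t * qBinomTerm a q t n =
      qBinomTerm a q (q * t) (n + 1) - a * t * qBinomTerm a q (q * t) n := by
    intro n
    have hQ := (qPoch_pos hq0.le hq1 hq0.le hq1.le n).ne'
    have hq : 1 - q ^ n * q ≠ 0 :=
      (sub_pos.2 <| pow_succ q n ▸ pow_lt_one₀ hq0.le hq1 n.succ_ne_zero).ne'
    simp only [qBinomTerm]
    rw [qPoch_succ a, qPoch_succ q q n, mul_pow, mul_pow]
    field_simp
    ring
  exact one_sub_mul_tsum_eq_of_succ (summable_qBinomTerm ha0 ha1 hq0 hq1 ht0 ht1)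
    (summable_qBinomTerm ha0 ha1 hq0 hq1 (by positivity) (by nlinarith))
    (by simp [qBinomTerm_zero]) hsucc

lemma qBinomSeries_eq_qPoch_mul (ha0 : 0 ≤ a) (ha1 : a < 1) (hq0 : 0 < q) (hq1 : q < 1)
    (ht0 : 0 ≤ t) (ht1 : t < 1) (j : ℕ) :
    qBinomSeries a q t = qPoch (a * t) q j * qBinomSeries (a * q ^ j) q t := by
  induction j generalizing a with
  | zero => simp [qPoch_zero]
  | succ j ih =>
    rw [qBinomSeries_eq_one_sub_mul ha0 ha1 hq0 hq1 ht0 ht1,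
      ih (by positivity) (by nlinarith), qPoch_succ']
    ring_nf

lemma qPoch_mul_qBinomSeries (ha0 : 0 ≤ a) (ha1 : a < 1) (hq0 : 0 < q) (hq1 : q < 1)
    (ht0 : 0 ≤ t) (ht1 : t < 1) (m : ℕ) :
    qPoch t q m * qBinomSeries a q t = qPoch (a * t) q m * qBinomSeries a q (q ^ m * t) := by
  induction m generalizing t with
  | zero => simp [qPoch_zero]
  | succ m ih =>
    calc qPoch t q (m + 1) * qBinomSeries a q t
        = qPoch (q * t) q m * ((1 - t) * qBinomSeries a q t) := by
          rw [qPoch_succ', mul_comm t]; ring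
      _ = (1 - a * t) * (qPoch (q * t) q m * qBinomSeries a q (q * t)) := by
        rw [one_sub_mul_qBinomSeries ha0 ha1 hq0 hq1 ht0 ht1]; ring
      _ = qPoch (a * t) q (m + 1) * qBinomSeries a q (q ^ (m + 1) * t) := by
        rw [ih (by positivity) (by nlinarith), qPoch_succ', pow_succ, mul_assoc]; ring_nf

lemma qPoch_mul_qBinomSeries_eq (ha0 : 0 ≤ a) (ha1 : a < 1) (hq0 : 0 < q) (hq1 : q < 1)
    (ht0 : 0 ≤ t) (ht1 : t < 1) (j m : ℕ) :
    qPoch t q m * qBinomSeries a q t =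
      qPoch (a * t) q (j + m) * qBinomSeries (a * q ^ j) q (q ^ m * t) := by
  have haj1 : a * q ^ j < 1 :=
    (mul_le_of_le_one_right ha0 (pow_le_one₀ hq0.le hq1.le)).trans_lt ha1
  rw [qBinomSeries_eq_qPoch_mul ha0 ha1 hq0 hq1 ht0 ht1 j, mul_left_comm,
    qPoch_mul_qBinomSeries (by positivity) haj1 hq0 hq1 ht0 ht1 m, qPoch_add]
  ring_nf

end qBinomSeries

noncomputable def qBinom (q : ℝ) : ℕ → ℕ → ℝ
  | _, 0 => 1
  | 0, _ + 1 => 0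
  | j + 1, i + 1 => q ^ (i + 1) * qBinom q j (i + 1) + qBinom q j i

lemma qBinom_eq_zero_of_lt (q : ℝ) {j i : ℕ} (h : j < i) : qBinom q j i = 0 := by
  induction j generalizing i with
  | zero => obtain ⟨i, rfl⟩ := Nat.exists_eq_succ_of_ne_zero h.ne'; rfl
  | succ j ih =>
    obtain ⟨i, rfl⟩ := Nat.exists_eq_succ_of_ne_zero (by omega : i ≠ 0)
    rw [qBinom, ih (by omega), ih (by omega), mul_zero, add_zero]

lemma qBinom_mul_qPoch (q : ℝ) {j i : ℕ} (h : i ≤ j) :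
    qBinom q j i * (qPoch q q i * qPoch q q (j - i)) = qPoch q q j := by
  induction j generalizing i with
  | zero =>
    obtain rfl : i = 0 := by omega
    simp [qBinom, qPoch_zero]
  | succ j ih =>
    cases i with
    | zero => simp [qBinom, qPoch_zero]
    | succ i =>
      rw [qBinom, Nat.add_sub_add_right]
      rcases h.lt_or_eq with hlt | heq
      · obtain ⟨k, hk⟩ : ∃ k, j - i = k + 1 := ⟨j - i - 1, by omega⟩
        have ih₁ := ih (i := i + 1) (by omega)
        have ih₂ := ih (i := i) (by omega)
        rw [show j - (i + 1) = k by omega, qPoch_succ q q i] at ih₁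
        rw [hk, qPoch_succ q q k] at ih₂
        rw [hk, qPoch_succ q q i, qPoch_succ q q k, qPoch_succ q q j]
        have hexp : q ^ (i + 1) * q ^ k = q ^ j := by rw [← pow_add]; congr 1; omega
        linear_combination (q ^ (i + 1) * (1 - q * q ^ k)) * ih₁ + (1 - q * q ^ i) * ih₂
          - q * qPoch q q j * hexp
      · obtain rfl : i = j := by omega
        have ih₀ := ih (i := i) le_rfl
        rw [Nat.sub_self] at ih₀ ⊢
        rw [qBinom_eq_zero_of_lt q (Nat.lt_succ_self i), qPoch_succ q q i]
        linear_combination (1 - q * q ^ i) * ih₀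

lemma qPoch_eq_sum_qBinom (q z : ℝ) (j : ℕ) (a : ℝ) :
    qPoch a q j = ∑ i ∈ range (j + 1), (-a) ^ i * q ^ i.choose 2 * qBinom q j i *
      qPoch z q i * qPoch (a * z * q ^ i) q (j - i) := by
  induction j generalizing a with
  | zero => simp [qBinom, qPoch_zero]
  | succ j ih =>
    set U : ℕ → ℝ := fun i => (-a) ^ i * q ^ i.choose 2 * (q ^ i * qBinom q j i) *
      qPoch z q i * qPoch (a * z * q ^ i) q (j + 1 - i) with hU
    set V : ℕ → ℝ := fun i => (-a) ^ (i + 1) * q ^ (i + 1).choose 2 * qBinom q j i *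
      qPoch z q (i + 1) * qPoch (a * z * q ^ (i + 1)) q (j - i) with hV
    have hUV : ∀ i ∈ range (j + 1), U i + V i = (1 - a) * ((-(a * q)) ^ i * q ^ i.choose 2 *
        qBinom q j i * qPoch z q i * qPoch (a * q * z * q ^ i) q (j - i)) := by
      intro i hi
      obtain ⟨k, hk⟩ : ∃ k, j + 1 - i = k + 1 := ⟨j - i, by simp at hi; omega⟩
      simp only [hU, hV]
      rw [hk, show j - i = k by omega, qPoch_succ' (a * z * q ^ i), qPoch_succ z q i,
        Nat.choose_succ_succ', Nat.choose_one_right,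
        show a * z * q ^ i * q = a * q * z * q ^ i by ring,
        show a * z * q ^ (i + 1) = a * q * z * q ^ i by ring]
      ring
    have hU_last : U (j + 1) = 0 := by simp [hU, qBinom_eq_zero_of_lt q (Nat.lt_succ_self j)]
    rw [qPoch_succ', ih (a * q), mul_sum, ← sum_congr rfl hUV, sum_add_distrib,
      ← add_zero (∑ i ∈ range (j + 1), U i), ← hU_last, ← sum_range_succ, sum_range_succ',
      sum_range_succ' _ (j + 1), add_right_comm, ← sum_add_distrib]
    congr 1
    · refine sum_congr rfl fun i _ => ?_
      simp only [hU, hV, qBinom, Nat.add_sub_add_right]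
      ring
    · simp [hU, qBinom]

lemma qPoch_mul_div_eq_sum_qBinom {b q x : ℝ} {j m : ℕ} (h : qPoch (b * x) q (j + m) ≠ 0) :
    qPoch b q j * qPoch x q m / qPoch (b * x) q (j + m) = ∑ i ∈ range (j + 1),
      (-b) ^ i * q ^ i.choose 2 * qBinom q j i * qPoch x q (m + i) / qPoch (b * x) q (m + i) := by
  rw [qPoch_eq_sum_qBinom q (x * q ^ m) j b, sum_mul, sum_div]
  refine sum_congr rfl fun i hi => ?_
  have hsplit : qPoch (b * x) q (j + m) =
      qPoch (b * x) q (m + i) * qPoch (b * (x * q ^ m) * q ^ i) q (j - i) := by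
    rw [show j + m = m + i + (j - i) by simp at hi; omega, qPoch_add, pow_add]
    ring_nf
  rw [hsplit] at h ⊢
  rw [qPoch_add x q m i, div_eq_div_iff h (left_ne_zero_of_mul h)]
  ring

lemma four_mul_choose_two_add (i : ℕ) : 4 * i.choose 2 + 2 * i = 2 * i ^ 2 := by
  induction i with
  | zero => rfl
  | succ i ih =>
    rw [Nat.choose_succ_succ', Nat.choose_one_right]
    ring_nf at ih ⊢
    omega

lemma kOp_iterate_apply (p : ℝ) (k : ℕ) (v : ℕ → ℂ) (n : ℕ) :
    (kOp p)^[k] v n = ((p : ℂ) ^ n * ((√p : ℝ) : ℂ)) ^ k * v n := by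
  induction k with
  | zero => simp
  | succ k ih => rw [Function.iterate_succ_apply', kOp, ih, pow_succ]; ring

lemma aPlus_iterate_apply_of_lt (p : ℝ) (v : ℕ → ℂ) {k n : ℕ} (h : n < k) :
    (aPlus p)^[k] v n = 0 := by
  induction k generalizing n with
  | zero => omega
  | succ k ih =>
    rw [Function.iterate_succ_apply']
    cases n with
    | zero => rfl
    | succ n => exact mul_eq_zero_of_right _ (ih (by omega))

lemma aPlus_iterate_apply_add (p : ℝ) (v : ℕ → ℂ) (k l : ℕ) :
    (aPlus p)^[k] v (l + k) =
      ((∏ i ∈ Ico l (l + k), √(1 - p ^ (2 * i + 2)) : ℝ) : ℂ) * v l := by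
  induction k with
  | zero => simp
  | succ k ih =>
    rw [← add_assoc, Function.iterate_succ_apply', aPlus, ih, prod_Ico_succ_top (by omega)]
    push_cast
    ring

lemma chi2_two_mul (p x : ℝ) (r : ℕ) :
    chi2 p x (2 * r) =
      ((x ^ r * √(qPoch (p ^ 2) (p ^ 2) (2 * r)) / qPoch (p ^ 4) (p ^ 4) r : ℝ) : ℂ) := by
  simp [chi2]

lemma chi2_of_odd (p x : ℝ) {n : ℕ} (h : Odd n) : chi2 p x n = 0 := by
  simp [chi2, Nat.odd_iff.1 h]

lemma sqrt_qPoch_mul_prod_sqrt {p : ℝ} (hp0 : 0 ≤ p) (hp1 : p ≤ 1) (n k : ℕ) :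
    √(qPoch (p ^ 2) (p ^ 2) n) * ∏ i ∈ Ico n (n + k), √(1 - p ^ (2 * i + 2)) =
      √(qPoch (p ^ 2) (p ^ 2) (n + k)) := by
  have hprod : ∀ N, qPoch (p ^ 2) (p ^ 2) N = ∏ i ∈ range N, (1 - p ^ (2 * i + 2)) := fun N =>
    prod_congr rfl fun i _ => by rw [← pow_mul, ← pow_add]; ring_nf
  have hnonneg : ∀ i : ℕ, 0 ≤ 1 - p ^ (2 * i + 2) := fun _ => sub_nonneg.2 (pow_le_one₀ hp0 hp1)
  rw [hprod, hprod, ← prod_range_mul_prod_Ico _ (Nat.le_add_right n k), Real.sqrt_mul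
    (prod_nonneg fun i _ => hnonneg i), Real.sqrt_prod _ fun i _ => hnonneg i,
    Real.sqrt_prod _ fun i _ => hnonneg i]

lemma aPlus_kOp_chi2_apply {p : ℝ} (hp0 : 0 ≤ p) (hp1 : p ≤ 1) (j m l : ℕ) :
    (aPlus p)^[2 * j] ((kOp p)^[2 * m] (chi2 p 1)) (2 * l + 2 * j) =
      ((((p ^ 4) ^ m) ^ l * p ^ m * √(qPoch (p ^ 2) (p ^ 2) (2 * (l + j))) /
        qPoch (p ^ 4) (p ^ 4) l : ℝ) : ℂ) := by
  have hsqrt : ((√p : ℝ) : ℂ) ^ (2 * m) = (p : ℂ) ^ m := by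
    rw [← Complex.ofReal_pow, pow_mul, Real.sq_sqrt hp0, Complex.ofReal_pow]
  rw [aPlus_iterate_apply_add, kOp_iterate_apply, chi2_two_mul, mul_add,
    ← sqrt_qPoch_mul_prod_sqrt hp0 hp1, mul_pow, hsqrt]
  push_cast
  ring

lemma chi2_mul_aPlus_kOp_chi2_apply {p x : ℝ} (hp0 : 0 ≤ p) (hp1 : p < 1) (j m l : ℕ) :
    chi2 p x (2 * l + 2 * j) * (aPlus p)^[2 * j] ((kOp p)^[2 * m] (chi2 p 1)) (2 * l + 2 * j) =
      ((x ^ j * p ^ m * qPoch (p ^ 2) (p ^ 4) j *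
        qBinomTerm (p ^ 2 * (p ^ 4) ^ j) (p ^ 4) ((p ^ 4) ^ m * x) l : ℝ) : ℂ) := by
  have hp2 : p ^ 2 < 1 := pow_lt_one₀ hp0 hp1 (by norm_num)
  have hp4 : p ^ 4 < 1 := pow_lt_one₀ hp0 hp1 (by norm_num)
  have hQ := (qPoch_pos (by positivity) hp4 (by positivity) hp4.le (l + j)).ne'
  have hA : √(qPoch (p ^ 2) (p ^ 2) (2 * (l + j))) ^ 2 = qPoch (p ^ 2) (p ^ 4) j *
      qPoch (p ^ 2 * (p ^ 4) ^ j) (p ^ 4) l * qPoch (p ^ 4) (p ^ 4) (l + j) := by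
    rw [Real.sq_sqrt (qPoch_pos (by positivity) hp2 (by positivity) hp2.le _).le, qPoch_two_mul,
      add_comm l, qPoch_add]
    ring_nf
  rw [aPlus_kOp_chi2_apply hp0 hp1.le, ← mul_add, chi2_two_mul, ← Complex.ofReal_mul]
  congr 1
  rw [qBinomTerm]
  field_simp
  rw [hA]
  ring

lemma pairF_chi2_aPlus_kOp_chi2 {p : ℝ} (x : ℝ) (hp0 : 0 ≤ p) (hp1 : p < 1) (j m : ℕ) :
    pairF (chi2 p x) ((aPlus p)^[2 * j] ((kOp p)^[2 * m] (chi2 p 1))) =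
      ((x ^ j * p ^ m * qPoch (p ^ 2) (p ^ 4) j *
        qBinomSeries (p ^ 2 * (p ^ 4) ^ j) (p ^ 4) ((p ^ 4) ^ m * x) : ℝ) : ℂ) := by
  have hsupp : Function.support (fun n =>
      chi2 p x n * (aPlus p)^[2 * j] ((kOp p)^[2 * m] (chi2 p 1)) n) ⊆
        Set.range (fun l => 2 * l + 2 * j) := by
    intro n hn
    rcases Nat.even_or_odd' n with ⟨r, rfl | rfl⟩
    · by_cases hrj : r < j
      · exact absurd (mul_eq_zero_of_right _ (aPlus_iterate_apply_of_lt p _ (by omega))) hn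
      · exact ⟨r - j, by dsimp only; omega⟩
    · exact absurd (mul_eq_zero_of_left (chi2_of_odd p x ⟨r, rfl⟩) _) hn
  have hinj : Function.Injective (fun l : ℕ => 2 * l + 2 * j) := fun a b h => by
    simp only at h; omega
  rw [pairF, ← hinj.tsum_eq hsupp]
  simp only [chi2_mul_aPlus_kOp_chi2_apply hp0 hp1, ← Complex.ofReal_tsum, tsum_mul_left]
  rfl

lemma qPoch_mul_div_eq_sum {p x : ℝ} (hp0 : 0 ≤ p) (hp1 : p < 1) (hx0 : 0 ≤ x) (hx1 : x < 1)
    (j m : ℕ) :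
    qPoch (p ^ 2) (p ^ 4) j * qPoch x (p ^ 4) m / qPoch (p ^ 2 * x) (p ^ 4) (j + m) =
      ∑ i ∈ range (j + 1), (-1) ^ i * p ^ (2 * i ^ 2) * qPoch (p ^ 4) (p ^ 4) j *
        qPoch x (p ^ 4) (m + i) /
        (qPoch (p ^ 4) (p ^ 4) i * qPoch (p ^ 4) (p ^ 4) (j - i) *
          qPoch (x * p ^ 2) (p ^ 4) (m + i)) := by
  have hp4 : p ^ 4 < 1 := pow_lt_one₀ hp0 hp1 (by norm_num)
  have hpx : p ^ 2 * x < 1 := by nlinarith [pow_le_one₀ (n := 2) hp0 hp1.le]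
  have hQ := fun n => (qPoch_pos (by positivity) hp4 (by positivity) hp4.le n).ne'
  rw [qPoch_mul_div_eq_sum_qBinom (qPoch_pos (by positivity) hpx (by positivity) hp4.le _).ne']
  refine sum_congr rfl fun i hi => ?_
  rw [← qBinom_mul_qPoch (p ^ 4) (by simpa [Nat.lt_succ_iff] using hi : i ≤ j), mul_comm x,
    ← four_mul_choose_two_add, pow_add, pow_mul, neg_pow]
  field_simp [hQ i, hQ (j - i)]
  ring

/-- `⟨(a⁺)^{2j} k^{2m}⟩₂₂ = x^j p^m Σ_{i=0}^j (-1)^i p^{2i²}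
(p⁴;p⁴)_j (x;p⁴)_{m+i} / ((p⁴;p⁴)_i (p⁴;p⁴)_{j-i} (xp²;p⁴)_{m+i})`,
where `⟨𝒪⟩₂₂ = ⟨χ̄₂(x)|𝒪|χ₂(1)⟩/⟨χ̄₂(x)|χ₂(1)⟩`. -/
theorem bracket22_aPlus (p x : ℝ) (hp : 0 < p) (hp1 : p < 1) (hx : 0 < x) (hx1 : x < 1)
    (j m : ℕ) :
    pairF (chi2 p x) ((aPlus p)^[2 * j] ((kOp p)^[2 * m] (chi2 p 1))) /
        pairF (chi2 p x) (chi2 p 1) =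
      (x : ℂ) ^ j * (p : ℂ) ^ m *
        ∑ i ∈ Finset.range (j + 1),
          (-1 : ℂ) ^ i * (p : ℂ) ^ (2 * i ^ 2) *
            ((qPoch (p ^ 4) (p ^ 4) j : ℝ) : ℂ) * ((qPoch x (p ^ 4) (m + i) : ℝ) : ℂ) /
            (((qPoch (p ^ 4) (p ^ 4) i : ℝ) : ℂ) * ((qPoch (p ^ 4) (p ^ 4) (j - i) : ℝ) : ℂ) *
              ((qPoch (x * p ^ 2) (p ^ 4) (m + i) : ℝ) : ℂ)) := by
  have hp2 : p ^ 2 < 1 := pow_lt_one₀ hp.le hp1 (by norm_num)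
  have hp4 : p ^ 4 < 1 := pow_lt_one₀ hp.le hp1 (by norm_num)
  have hden := pairF_chi2_aPlus_kOp_chi2 x hp.le hp1 0 0
  simp only [mul_zero, Function.iterate_zero_apply, pow_zero, one_mul, mul_one, qPoch_zero] at hden
  have hφ := one_le_qBinomSeries (by positivity) hp2 (by positivity) hp4 hx.le hx1
  have hshift := qPoch_mul_qBinomSeries_eq (by positivity) hp2 (by positivity) hp4 hx.le hx1 j m
  have hpx := qPoch_pos (by positivity) (by nlinarith : p ^ 2 * x < 1) (by positivity) hp4.le
    (j + m)
  have hratio : x ^ j * p ^ m * qPoch (p ^ 2) (p ^ 4) j *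
      qBinomSeries (p ^ 2 * (p ^ 4) ^ j) (p ^ 4) ((p ^ 4) ^ m * x) /
        qBinomSeries (p ^ 2) (p ^ 4) x =
      x ^ j * p ^ m * (qPoch (p ^ 2) (p ^ 4) j * qPoch x (p ^ 4) m /
        qPoch (p ^ 2 * x) (p ^ 4) (j + m)) := by
    field_simp
    linear_combination -qPoch (p ^ 2) (p ^ 4) j * hshift
  rw [pairF_chi2_aPlus_kOp_chi2 x hp.le hp1, hden, ← Complex.ofReal_div, hratio,
    qPoch_mul_div_eq_sum hp.le hp1 hx.le hx1]
  push_cast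
  ring
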